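/- For every real ε ≠ −1, with R_ε := (1/(1+ε))·(id − ε·S), the following identity holds for every real inner product space and every family of vectors (V_w): ‖(id−E)∘id‖² = ‖(id−E)∘R_ε‖² + (2ε/(1+ε)²)·( ‖(id−E)∘id‖² + ⟨(id−E)∘id, (id−E)∘S⟩ ), where the inner product is taken over the words of length n. -/

import Mathlib

open Finsupp

/-- Words over the alphabet `A = {0,1,…,d}`. -/
abbrev Word (d : ℕ) : Type := List (Fin (d+1))

/-- The free real vector space with basis the set of all words. -/
abbrev KA (d : ℕ) : Type := Word d →₀ ℝ

/-- Shuffle product of two words, as an element of `KA d`. -/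
noncomputable def shuffleWord (d : ℕ) : Word d → Word d → KA d
  | [], v => Finsupp.single v 1
  | a :: u, [] => Finsupp.single (a :: u) 1
  | a :: u, b :: v =>
      Finsupp.mapDomain (List.cons a) (shuffleWord d u (b :: v)) +
      Finsupp.mapDomain (List.cons b) (shuffleWord d (a :: u) v)
  termination_by u v => u.length + v.length

/-- Bilinear extension of the shuffle product to `KA d`. -/
noncomputable def sh (d : ℕ) (x y : KA d) : KA d :=
  x.sum fun u cu => y.sum fun v cv => (cu * cv) • shuffleWord d u v

/-- Admissible words: concatenations of blocks each of which is the single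
letter `0` or a pair `aa` with `a ≠ 0`. -/
inductive Admissible (d : ℕ) : Word d → Prop
  | nil : Admissible d []
  | zero {w : Word d} : Admissible d w → Admissible d (0 :: w)
  | pair {w : Word d} (a : Fin (d+1)) : a ≠ 0 → Admissible d w →
      Admissible d (a :: a :: w)

/-- Number of `0` letters. -/
def zc (d : ℕ) (w : Word d) : ℕ := w.count 0

/-- Half the number of nonzero letters. -/
def dc (d : ℕ) (w : Word d) : ℕ := (w.length - w.count 0) / 2

def nc (d : ℕ) (w : Word d) : ℕ := zc d w + dc d w

open Classical in
/-- The expectation map on words. -/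
noncomputable def Ebar (d : ℕ) (t : ℝ) (w : Word d) : ℝ :=
  if Admissible d w then t ^ nc d w / (2 ^ dc d w * Nat.factorial (nc d w)) else 0

/-- Linear extension of the expectation map to `KA d`. -/
noncomputable def EbarL (d : ℕ) (t : ℝ) (x : KA d) : ℝ :=
  x.sum fun w c => c * Ebar d t w

/-- The linear endomorphism of `KA d` determined by values on basis words. -/
noncomputable def wordLift (d : ℕ) (f : Word d → KA d) : KA d →ₗ[ℝ] KA d :=
  Finsupp.lsum ℝ fun w => LinearMap.toSpanSingleton ℝ (KA d) (f w)

/-- The identity endomorphism `id`. -/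
noncomputable def idE (d : ℕ) : KA d →ₗ[ℝ] KA d := LinearMap.id

/-- The reversal endomorphism `|S|`. -/
noncomputable def revE (d : ℕ) : KA d →ₗ[ℝ] KA d :=
  wordLift d fun w => Finsupp.single w.reverse 1

/-- The antipode `S`. -/
noncomputable def Sa (d : ℕ) : KA d →ₗ[ℝ] KA d :=
  wordLift d fun w => Finsupp.single w.reverse ((-1 : ℝ) ^ w.length)

/-- The convolution unit `ν`. -/
noncomputable def nuE (d : ℕ) : KA d →ₗ[ℝ] KA d :=
  wordLift d fun w => if w = [] then Finsupp.single ([] : Word d) 1 else 0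

/-- The expectation endomorphism `E`. -/
noncomputable def EE (d : ℕ) (t : ℝ) : KA d →ₗ[ℝ] KA d :=
  wordLift d fun w => Finsupp.single ([] : Word d) (Ebar d t w)

/-- The convolution product `X ⋆ Y`. -/
noncomputable def conv (d : ℕ) (X Y : KA d →ₗ[ℝ] KA d) : KA d →ₗ[ℝ] KA d :=
  wordLift d fun w => ∑ k ∈ Finset.range (w.length + 1),
    sh d (X (Finsupp.single (w.take k) 1)) (Y (Finsupp.single (w.drop k) 1))

/-- Convolution powers, `X^{⋆0} = ν`. -/
noncomputable def convPow (d : ℕ) (X : KA d →ₗ[ℝ] KA d) : ℕ → (KA d →ₗ[ℝ] KA d)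
  | 0 => nuE d
  | k + 1 => conv d X (convPow d X k)

/-- The inner product `⟨X,Y⟩` of endomorphisms, taken over the words of
length `n`, relative to the family of vectors `Vf`. -/
noncomputable def ip (d : ℕ) (t : ℝ) {H : Type*} [NormedAddCommGroup H]
    [InnerProductSpace ℝ H] (Vf : Word d → H) (n : ℕ)
    (X Y : KA d →ₗ[ℝ] KA d) : ℝ :=
  ∑ u : Fin n → Fin (d+1), ∑ v : Fin n → Fin (d+1),
    EbarL d t (sh d (X (Finsupp.single (List.ofFn u) 1))
                    (Y (Finsupp.single (List.ofFn v) 1))) *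
      (inner ℝ (Vf (List.ofFn u)) (Vf (List.ofFn v)) : ℝ)

/-- Positive semidefiniteness of the expectation Gram matrix at grade `n`:
indexed by the words of length `n` together with the empty word. -/
def gramPSD (d n : ℕ) (t : ℝ) : Prop :=
  ∀ c : Option (Fin n → Fin (d+1)) → ℝ,
    0 ≤ ∑ x : Option (Fin n → Fin (d+1)), ∑ y : Option (Fin n → Fin (d+1)),
      c x * c y *
        EbarL d t (shuffleWord d (x.elim ([] : Word d) List.ofFn)
                                 (y.elim ([] : Word d) List.ofFn))

/-- `R_ε = (1/(1+ε))·(id − ε·S)`. -/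
noncomputable def Reps (d : ℕ) (ε : ℝ) : KA d →ₗ[ℝ] KA d :=
  (1 / (1 + ε)) • (idE d - ε • Sa d)

/-! Since `⟨X, Y⟩` is a symmetric bilinear form in `X` and `Y`, expanding `‖(id−E)∘R_ε‖²` reduces
the identity to `‖(id−E)∘S‖² = ‖id−E‖²`. On words of length `n` the antipode is `(−1)ⁿ` times
reversal; reversal commutes with `E` and preserves `Ē(x ⧢ y)`, because it reverses shuffles and
admissibility is invariant under reversal. -/

lemma shuffleWord_nil_left (d : ℕ) (w : Word d) : shuffleWord d [] w = Finsupp.single w 1 := by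
  rw [shuffleWord]

lemma shuffleWord_nil_right (d : ℕ) (w : Word d) : shuffleWord d w [] = Finsupp.single w 1 := by
  cases w <;> rw [shuffleWord]

lemma shuffleWord_comm (d : ℕ) : ∀ u v : Word d, shuffleWord d u v = shuffleWord d v u
  | [], v => by rw [shuffleWord_nil_left, shuffleWord_nil_right]
  | a :: u, [] => by rw [shuffleWord_nil_left, shuffleWord_nil_right]
  | a :: u, b :: v => by
      rw [shuffleWord, shuffleWord, shuffleWord_comm d u (b :: v),
        shuffleWord_comm d (a :: u) v, add_comm]
  termination_by u v => u.length + v.length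

lemma mapDomain_append_singleton_mapDomain_cons (d : ℕ) (a c : Fin (d+1)) (x : KA d) :
    Finsupp.mapDomain (· ++ [a]) (Finsupp.mapDomain (List.cons c) x) =
      Finsupp.mapDomain (List.cons c) (Finsupp.mapDomain (· ++ [a]) x) := by
  rw [← Finsupp.mapDomain_comp, ← Finsupp.mapDomain_comp]
  rfl

lemma shuffleWord_append_singleton (d : ℕ) : ∀ (u v : Word d) (a b : Fin (d+1)),
    shuffleWord d (u ++ [a]) (v ++ [b]) =
      Finsupp.mapDomain (· ++ [a]) (shuffleWord d u (v ++ [b])) +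
      Finsupp.mapDomain (· ++ [b]) (shuffleWord d (u ++ [a]) v)
  | [], [], a, b => by
      simp only [List.nil_append, shuffleWord, shuffleWord_nil_left, shuffleWord_nil_right,
        Finsupp.mapDomain_single, List.singleton_append]
      rw [add_comm]
  | [], c :: v, a, b => by
      have ih := shuffleWord_append_singleton d [] v a b
      simp only [List.nil_append, List.cons_append, shuffleWord] at ih ⊢
      rw [ih]
      simp only [Finsupp.mapDomain_add, Finsupp.mapDomain_single, List.cons_append,
        mapDomain_append_singleton_mapDomain_cons]
      abel
  | a' :: u, [], a, b => by
      have ih := shuffleWord_append_singleton d u [] a b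
      simp only [List.nil_append, List.cons_append, shuffleWord] at ih ⊢
      rw [ih]
      simp only [shuffleWord_nil_right, Finsupp.mapDomain_add, Finsupp.mapDomain_single,
        List.cons_append, mapDomain_append_singleton_mapDomain_cons]
      abel
  | a' :: u, c :: v, a, b => by
      have ih₁ := shuffleWord_append_singleton d u (c :: v) a b
      have ih₂ := shuffleWord_append_singleton d (a' :: u) v a b
      simp only [List.cons_append] at ih₁ ih₂ ⊢
      rw [shuffleWord, ih₁, ih₂]
      conv_rhs => rw [shuffleWord, shuffleWord]
      simp only [Finsupp.mapDomain_add, mapDomain_append_singleton_mapDomain_cons]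
      abel
  termination_by u v => u.length + v.length

lemma shuffleWord_reverse (d : ℕ) : ∀ u v : Word d,
    shuffleWord d u.reverse v.reverse = Finsupp.mapDomain List.reverse (shuffleWord d u v)
  | [], v => by
      rw [List.reverse_nil, shuffleWord_nil_left, shuffleWord_nil_left, Finsupp.mapDomain_single]
  | a :: u, [] => by
      rw [List.reverse_nil, shuffleWord_nil_right, shuffleWord_nil_right,
        Finsupp.mapDomain_single]
  | a :: u, b :: v => by
      rw [List.reverse_cons, List.reverse_cons, shuffleWord_append_singleton,
        ← List.reverse_cons, ← List.reverse_cons, shuffleWord_reverse d u (b :: v),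
        shuffleWord_reverse d (a :: u) v, shuffleWord]
      simp only [Finsupp.mapDomain_add, ← Finsupp.mapDomain_comp]
      congr 2 <;> (funext w; simp)
  termination_by u v => u.length + v.length

lemma Admissible.append_zero {d : ℕ} {w : Word d} (h : Admissible d w) :
    Admissible d (w ++ [0]) := by
  induction h with
  | nil => exact .zero .nil
  | zero _ ih => exact .zero ih
  | pair a ha _ ih => exact .pair a ha ih

lemma Admissible.append_pair {d : ℕ} {w : Word d} {a : Fin (d+1)} (ha : a ≠ 0)
    (h : Admissible d w) : Admissible d (w ++ [a, a]) := by
  induction h with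
  | nil => exact .pair a ha .nil
  | zero _ ih => exact .zero ih
  | pair b hb _ ih => exact .pair b hb ih

lemma Admissible.reverse {d : ℕ} {w : Word d} (h : Admissible d w) :
    Admissible d w.reverse := by
  induction h with
  | nil => exact .nil
  | zero _ ih => simpa using ih.append_zero
  | pair a ha _ ih => simpa using ih.append_pair ha

lemma admissible_reverse_iff {d : ℕ} {w : Word d} :
    Admissible d w.reverse ↔ Admissible d w :=
  ⟨fun h => by simpa using h.reverse, Admissible.reverse⟩

lemma Ebar_reverse (d : ℕ) (t : ℝ) (w : Word d) : Ebar d t w.reverse = Ebar d t w := by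
  unfold Ebar nc zc dc
  rw [admissible_reverse_iff, List.count_reverse, List.length_reverse]

noncomputable def shuffleBilin (d : ℕ) : KA d →ₗ[ℝ] KA d →ₗ[ℝ] KA d :=
  Finsupp.linearCombination ℝ fun u => Finsupp.linearCombination ℝ (shuffleWord d u)

lemma sh_eq_shuffleBilin (d : ℕ) (x y : KA d) : sh d x y = shuffleBilin d x y := by
  simp only [sh, shuffleBilin, Finsupp.linearCombination_apply, Finsupp.sum,
    LinearMap.sum_apply, LinearMap.smul_apply, Finset.smul_sum, smul_smul]

noncomputable def expectPairing (d : ℕ) (t : ℝ) : KA d →ₗ[ℝ] KA d →ₗ[ℝ] ℝ :=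
  (shuffleBilin d).compr₂ (Finsupp.linearCombination ℝ (Ebar d t))

lemma EbarL_sh (d : ℕ) (t : ℝ) (x y : KA d) :
    EbarL d t (sh d x y) = expectPairing d t x y := by
  simp [EbarL, sh_eq_shuffleBilin, expectPairing, Finsupp.linearCombination_apply]

lemma expectPairing_single_single (d : ℕ) (t : ℝ) (u v : Word d) (c c' : ℝ) :
    expectPairing d t (Finsupp.single u c) (Finsupp.single v c') =
      c * c' * Finsupp.linearCombination ℝ (Ebar d t) (shuffleWord d u v) := by
  simp [expectPairing, shuffleBilin, mul_assoc]

lemma expectPairing_comm (d : ℕ) (t : ℝ) (x y : KA d) :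
    expectPairing d t x y = expectPairing d t y x := by
  suffices (expectPairing d t).flip = expectPairing d t from (LinearMap.congr_fun₂ this x y).symm
  ext u v
  simp [expectPairing_single_single, shuffleWord_comm]

lemma wordLift_single (d : ℕ) (f : Word d → KA d) (w : Word d) (c : ℝ) :
    wordLift d f (Finsupp.single w c) = c • f w := by
  simp [wordLift]

lemma revE_single (d : ℕ) (w : Word d) (c : ℝ) :
    revE d (Finsupp.single w c) = Finsupp.single w.reverse c := by
  simp [revE, wordLift_single]

lemma expectPairing_revE (d : ℕ) (t : ℝ) (x y : KA d) :
    expectPairing d t (revE d x) (revE d y) = expectPairing d t x y := by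
  suffices (expectPairing d t).compl₁₂ (revE d) (revE d) = expectPairing d t from
    LinearMap.congr_fun₂ this x y
  ext u v
  simp [expectPairing_single_single, revE_single, shuffleWord_reverse,
    Finsupp.linearCombination_mapDomain, (funext (Ebar_reverse d t) : Ebar d t ∘ List.reverse = _)]

lemma Sa_single (d : ℕ) (w : Word d) :
    Sa d (Finsupp.single w 1) = (-1 : ℝ) ^ w.length • revE d (Finsupp.single w 1) := by
  simp [Sa, wordLift_single, revE_single]

lemma EE_single (d : ℕ) (t : ℝ) (w : Word d) (c : ℝ) :
    EE d t (Finsupp.single w c) = Finsupp.single [] (c * Ebar d t w) := by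
  simp [EE, wordLift_single]

lemma idE_sub_EE_comp_revE (d : ℕ) (t : ℝ) :
    (idE d - EE d t) ∘ₗ revE d = revE d ∘ₗ (idE d - EE d t) := by
  refine Finsupp.lhom_ext fun w c => ?_
  simp only [LinearMap.comp_apply, LinearMap.sub_apply, idE, LinearMap.id_apply, map_sub,
    revE_single, EE_single, Ebar_reverse, List.reverse_nil]

section InnerProduct

variable (d : ℕ) (t : ℝ) {H : Type*} [NormedAddCommGroup H] [InnerProductSpace ℝ H]
  (Vf : Word d → H) (n : ℕ)

lemma ip_eq_sum_expectPairing (X Y : KA d →ₗ[ℝ] KA d) :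
    ip d t Vf n X Y = ∑ u : Fin n → Fin (d+1), ∑ v : Fin n → Fin (d+1),
      expectPairing d t (X (Finsupp.single (List.ofFn u) 1)) (Y (Finsupp.single (List.ofFn v) 1)) *
        inner ℝ (Vf (List.ofFn u)) (Vf (List.ofFn v)) := by
  simp only [ip, EbarL_sh]

lemma ip_smul_left (c : ℝ) (X Y : KA d →ₗ[ℝ] KA d) :
    ip d t Vf n (c • X) Y = c * ip d t Vf n X Y := by
  simp only [ip_eq_sum_expectPairing, LinearMap.smul_apply, map_smul, smul_eq_mul,
    Finset.mul_sum, mul_assoc]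

lemma ip_smul_right (c : ℝ) (X Y : KA d →ₗ[ℝ] KA d) :
    ip d t Vf n X (c • Y) = c * ip d t Vf n X Y := by
  simp only [ip_eq_sum_expectPairing, LinearMap.smul_apply, map_smul, smul_eq_mul,
    Finset.mul_sum, mul_assoc]

lemma ip_sub_left (X X' Y : KA d →ₗ[ℝ] KA d) :
    ip d t Vf n (X - X') Y = ip d t Vf n X Y - ip d t Vf n X' Y := by
  simp only [ip_eq_sum_expectPairing, LinearMap.sub_apply, map_sub, sub_mul,
    Finset.sum_sub_distrib]

lemma ip_sub_right (X Y Y' : KA d →ₗ[ℝ] KA d) :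
    ip d t Vf n X (Y - Y') = ip d t Vf n X Y - ip d t Vf n X Y' := by
  simp only [ip_eq_sum_expectPairing, LinearMap.sub_apply, map_sub, sub_mul,
    Finset.sum_sub_distrib]

lemma ip_comm (X Y : KA d →ₗ[ℝ] KA d) : ip d t Vf n X Y = ip d t Vf n Y X := by
  rw [ip_eq_sum_expectPairing, ip_eq_sum_expectPairing, Finset.sum_comm]
  refine Finset.sum_congr rfl fun u _ => Finset.sum_congr rfl fun v _ => ?_
  rw [expectPairing_comm, real_inner_comm]

lemma ip_revE_comp (X Y : KA d →ₗ[ℝ] KA d) :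
    ip d t Vf n (revE d ∘ₗ X) (revE d ∘ₗ Y) = ip d t Vf n X Y := by
  simp only [ip_eq_sum_expectPairing, LinearMap.comp_apply, expectPairing_revE]

lemma ip_comp_Sa (X Y : KA d →ₗ[ℝ] KA d) :
    ip d t Vf n (X ∘ₗ Sa d) (Y ∘ₗ Sa d) = ip d t Vf n (X ∘ₗ revE d) (Y ∘ₗ revE d) := by
  have hsign : (-1 : ℝ) ^ n * (-1) ^ n = 1 := by rw [← pow_add, Even.neg_one_pow ⟨n, rfl⟩]
  simp only [ip_eq_sum_expectPairing, LinearMap.comp_apply, Sa_single, List.length_ofFn,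
    map_smul, LinearMap.smul_apply, smul_eq_mul, ← mul_assoc, hsign, one_mul]

end InnerProduct

theorem stmt_1_general (d n : ℕ) (t : ℝ)
    {H : Type*} [NormedAddCommGroup H] [InnerProductSpace ℝ H]
    (Vf : Word d → H) (ε : ℝ) (hε : ε ≠ -1) :
    ip d t Vf n ((idE d - EE d t) ∘ₗ idE d) ((idE d - EE d t) ∘ₗ idE d)
      = ip d t Vf n ((idE d - EE d t) ∘ₗ Reps d ε) ((idE d - EE d t) ∘ₗ Reps d ε)
        + (2 * ε / (1 + ε) ^ 2) *
          (ip d t Vf n ((idE d - EE d t) ∘ₗ idE d) ((idE d - EE d t) ∘ₗ idE d)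
            + ip d t Vf n ((idE d - EE d t) ∘ₗ idE d) ((idE d - EE d t) ∘ₗ Sa d)) := by
  set F := idE d - EE d t
  have hε' : 1 + ε ≠ 0 := fun h => hε (by linarith)
  have hFid : F ∘ₗ idE d = F := LinearMap.comp_id F
  have hFR : F ∘ₗ Reps d ε = (1 / (1 + ε)) • (F - ε • (F ∘ₗ Sa d)) := by
    rw [Reps, LinearMap.comp_smul, LinearMap.comp_sub, LinearMap.comp_smul, hFid]
  have hFS : ip d t Vf n (F ∘ₗ Sa d) (F ∘ₗ Sa d) = ip d t Vf n F F := by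
    rw [ip_comp_Sa, idE_sub_EE_comp_revE, ip_revE_comp]
  rw [hFid, hFR]
  simp only [ip_smul_left, ip_smul_right, ip_sub_left, ip_sub_right, hFS]
  rw [ip_comm d t Vf n (F ∘ₗ Sa d) F]
  field_simp
  ring

theorem stmt_1 (d n : ℕ) (hd : 1 ≤ d) (hn : 1 ≤ n) (t : ℝ) (ht : 0 < t)
    {H : Type*} [NormedAddCommGroup H] [InnerProductSpace ℝ H]
    (Vf : Word d → H) (ε : ℝ) (hε : ε ≠ -1) :
    ip d t Vf n ((idE d - EE d t) ∘ₗ idE d) ((idE d - EE d t) ∘ₗ idE d)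
      = ip d t Vf n ((idE d - EE d t) ∘ₗ Reps d ε) ((idE d - EE d t) ∘ₗ Reps d ε)
        + (2 * ε / (1 + ε) ^ 2) *
          (ip d t Vf n ((idE d - EE d t) ∘ₗ idE d) ((idE d - EE d t) ∘ₗ idE d)
            + ip d t Vf n ((idE d - EE d t) ∘ₗ idE d) ((idE d - EE d t) ∘ₗ Sa d)) :=
  stmt_1_general d n t Vf ε hε
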